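/- For an integral domain D the following are equivalent: (i) D is a valuation domain; (ii) D is a t-local GCD domain; (iii) D is a t-local Prüfer v-multiplication domain (PvMD). -/

import Mathlib

open scoped nonZeroDivisors

/-- The `t`-closure of a fractional ideal `E` of an integral domain `D`:
the union (here: supremum, which is a directed union) of `F^v = (F⁻¹)⁻¹` over all
nonzero finitely generated fractional subideals `F` of `E`, viewed as a
`D`-submodule of the fraction field of `D`. -/
noncomputable def tClos (D : Type*) [CommRing D] [IsDomain D]
    (E : FractionalIdeal D⁰ (FractionRing D)) : Submodule D (FractionRing D) :=
  ⨆ F ∈ {F : FractionalIdeal D⁰ (FractionRing D) |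
      F ≠ 0 ∧ F ≤ E ∧ (F : Submodule D (FractionRing D)).FG},
    (((F⁻¹)⁻¹ : FractionalIdeal D⁰ (FractionRing D)) : Submodule D (FractionRing D))

/-- An integral ideal `I` of an integral domain `D` is a `t`-ideal if `I = I^t`. -/
def Ideal.IsT {D : Type*} [CommRing D] [IsDomain D] (I : Ideal D) : Prop :=
  ((I : FractionalIdeal D⁰ (FractionRing D)) : Submodule D (FractionRing D)) = tClos D I

/-- An integral domain is `t`-local if it is local and its maximal ideal is a `t`-ideal. -/
def IsTLocal (A : Type*) [CommRing A] [IsDomain A] : Prop :=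
  ∃ h : IsLocalRing A, Ideal.IsT (@IsLocalRing.maximalIdeal A _ h)

/-!
A valuation domain is Bézout, so its finitely generated fractional ideals are principal,
hence divisorial, and every ideal is a `t`-ideal; this gives (i) ⇒ (ii) and (i) ⇒ (iii).

Conversely, in a `t`-local domain an integral ideal `J` with `1 ∈ J^t` is all of `D`, since
otherwise `J^t ⊆ M^t = M`. Applied to `I I⁻¹` this makes every `t`-invertible finitely
generated ideal invertible, hence principal in a local domain, so `D` is a local Bézout domain.
Applied to `(α, β)`, where `bα = aβ` generates `aD ∩ bD`, it shows that `α` or `β` is a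
unit, so `a ∣ b` or `b ∣ a`.
-/

section

open FractionalIdeal IsLocalRing

variable {D : Type*} [CommRing D] [IsDomain D]

theorem FractionalIdeal.spanSingleton_inv_inv {K : Type*} [Field K] [Algebra D K] [IsFractionRing D K] (x : K) :
    (spanSingleton D⁰ x)⁻¹⁻¹ = spanSingleton D⁰ x := by
  rw [spanSingleton_inv, spanSingleton_inv, inv_inv]

theorem le_tClos {E F : FractionalIdeal D⁰ (FractionRing D)} (hF : F ≠ 0) (hFE : F ≤ E)
    (hfg : (F : Submodule D (FractionRing D)).FG) :
    ((F⁻¹⁻¹ : FractionalIdeal D⁰ (FractionRing D)) : Submodule D (FractionRing D)) ≤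
      tClos D E :=
  le_biSup (fun F : FractionalIdeal D⁰ (FractionRing D) =>
    ((F⁻¹⁻¹ : FractionalIdeal D⁰ (FractionRing D)) : Submodule D (FractionRing D)))
    (show F ∈ {F | F ≠ 0 ∧ F ≤ E ∧ _} from ⟨hF, hFE, hfg⟩)

theorem tClos_le {E : FractionalIdeal D⁰ (FractionRing D)} {X : Submodule D (FractionRing D)}
    (h : ∀ F : FractionalIdeal D⁰ (FractionRing D), F ≠ 0 → F ≤ E →
      (F : Submodule D (FractionRing D)).FG →
        ((F⁻¹⁻¹ : FractionalIdeal D⁰ (FractionRing D)) : Submodule D (FractionRing D)) ≤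
          X) :
    tClos D E ≤ X :=
  iSup₂_le fun F hF => h F hF.1 hF.2.1 hF.2.2

theorem tClos_mono {E E' : FractionalIdeal D⁰ (FractionRing D)} (h : E ≤ E') :
    tClos D E ≤ tClos D E' :=
  tClos_le fun _ hF hFE hfg => le_tClos hF (hFE.trans h) hfg

theorem coe_le_tClos (E : FractionalIdeal D⁰ (FractionRing D)) :
    (E : Submodule D (FractionRing D)) ≤ tClos D E := by
  intro x hx
  rcases eq_or_ne x 0 with rfl | hx0
  · exact zero_mem _
  refine le_tClos (spanSingleton_ne_zero_iff.mpr hx0) (spanSingleton_le_iff_mem.mpr hx) ?_ ?_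
  · rw [coe_spanSingleton]
    exact Submodule.fg_span_singleton x
  · rw [spanSingleton_inv_inv]
    exact mem_spanSingleton_self _ _

theorem one_le_tClos_of_inv_eq_one {F : FractionalIdeal D⁰ (FractionRing D)}
    (hfg : (F : Submodule D (FractionRing D)).FG) (hF : F⁻¹ = 1) :
    ((1 : FractionalIdeal D⁰ (FractionRing D)) : Submodule D (FractionRing D)) ≤ tClos D F := by
  have hF0 : F ≠ 0 := by
    rintro rfl
    rw [inv_zero'] at hF
    exact zero_ne_one hF
  simpa only [hF, inv_one] using le_tClos hF0 le_rfl hfg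

/-- Finitely generated fractional ideals of a Bézout domain are principal, hence divisorial. -/
theorem tClos_coeIdeal [IsBezout D] (J : Ideal D) :
    tClos D J = ((J : FractionalIdeal D⁰ (FractionRing D)) : Submodule D (FractionRing D)) := by
  refine le_antisymm (tClos_le fun F _ hFJ hfg => ?_) (coe_le_tClos _)
  obtain ⟨I, rfl⟩ := le_one_iff_exists_coeIdeal.mp (hFJ.trans coeIdeal_le_one)
  obtain ⟨⟨x, rfl⟩⟩ := IsBezout.isPrincipal_of_FG I
    ((coeIdeal_fg D⁰ (IsFractionRing.injective D _) I).mp hfg)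
  rw [Ideal.submodule_span_eq, coeIdeal_span_singleton, spanSingleton_inv_inv,
    ← coeIdeal_span_singleton]
  exact coe_le_coe.mpr hFJ

theorem tClos_coeIdeal_mul_inv [IsBezout D] {I : Ideal D} (hI : I ≠ ⊥) (hfg : I.FG) :
    tClos D ((I : FractionalIdeal D⁰ (FractionRing D)) *
        (I : FractionalIdeal D⁰ (FractionRing D))⁻¹) =
      ((1 : FractionalIdeal D⁰ (FractionRing D)) : Submodule D (FractionRing D)) := by
  obtain ⟨⟨x, rfl⟩⟩ := IsBezout.isPrincipal_of_FG I hfg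
  rw [Ideal.submodule_span_eq, Ne, Ideal.span_singleton_eq_bot] at hI
  rw [Ideal.submodule_span_eq, coeIdeal_span_singleton,
    spanSingleton_mul_inv _ (IsFractionRing.to_map_ne_zero_of_mem_nonZeroDivisors
      (mem_nonZeroDivisors_of_ne_zero hI)), ← coeIdeal_top, tClos_coeIdeal]

theorem ValuationRing.inf_span_singleton_isPrincipal [ValuationRing D] (a b : D) :
    (Ideal.span {a} ⊓ Ideal.span {b}).IsPrincipal := by
  rcases ValuationRing.dvd_total a b with hab | hba
  · rw [inf_eq_right.mpr (Ideal.span_singleton_le_span_singleton.mpr hab)]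
    exact ⟨⟨b, rfl⟩⟩
  · rw [inf_eq_left.mpr (Ideal.span_singleton_le_span_singleton.mpr hba)]
    exact ⟨⟨a, rfl⟩⟩

theorem IsTLocal.of_isBezout [IsLocalRing D] [IsBezout D] : IsTLocal D :=
  ⟨inferInstance, (tClos_coeIdeal _).symm⟩

theorem IsTLocal.eq_one_of_one_le_tClos (hD : IsTLocal D)
    {E : FractionalIdeal D⁰ (FractionRing D)} (hE : E ≤ 1)
    (h : ((1 : FractionalIdeal D⁰ (FractionRing D)) : Submodule D (FractionRing D)) ≤
      tClos D E) : E = 1 := by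
  obtain ⟨_, hM⟩ := hD
  obtain ⟨J, rfl⟩ := le_one_iff_exists_coeIdeal.mp hE
  rw [coeIdeal_eq_one, Ideal.one_eq_top]
  by_contra hJ
  have h1M : (1 : FractionalIdeal D⁰ (FractionRing D)) ≤ (maximalIdeal D : _) := by
    rw [← coe_le_coe]
    exact h.trans <| (tClos_mono ((coeIdeal_le_coeIdeal _).mpr (le_maximalIdeal hJ))).trans
      (le_of_eq (Eq.symm hM))
  rw [← coeIdeal_top, coeIdeal_le_coeIdeal, top_le_iff] at h1M
  exact (maximalIdeal.isMaximal D).ne_top h1M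

theorem IsTLocal.eq_top_of_inv_eq_one (hD : IsTLocal D) {J : Ideal D} (hfg : J.FG)
    (h : (J : FractionalIdeal D⁰ (FractionRing D))⁻¹ = 1) : J = ⊤ := by
  rw [← Ideal.one_eq_top, ← coeIdeal_eq_one (K := FractionRing D)]
  exact hD.eq_one_of_one_le_tClos coeIdeal_le_one
    (one_le_tClos_of_inv_eq_one ((coeIdeal_fg D⁰ (IsFractionRing.injective D _) J).mpr hfg) h)

theorem IsTLocal.valuationRing_of_tClos_mul_inv_eq_one (hD : IsTLocal D)
    (h : ∀ I : Ideal D, I ≠ ⊥ → I.FG →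
      tClos D ((I : FractionalIdeal D⁰ (FractionRing D)) *
          (I : FractionalIdeal D⁰ (FractionRing D))⁻¹) =
        ((1 : FractionalIdeal D⁰ (FractionRing D)) : Submodule D (FractionRing D))) :
    ValuationRing D := by
  obtain ⟨_, _⟩ := id hD
  have hfin : {I : Ideal D | I.IsMaximal}.Finite :=
    (Set.finite_singleton (maximalIdeal D)).subset fun _ hI => eq_maximalIdeal hI
  have : IsBezout D := ⟨fun I hfg => by
    rcases eq_or_ne I ⊥ with rfl | hI
    · exact bot_isPrincipal
    refine Ideal.IsPrincipal.of_finite_maximals_of_isUnit hfin ((mul_inv_cancel_iff_isUnit _).mp ?_)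
    exact hD.eq_one_of_one_le_tClos mul_one_div_le_one (h I hI hfg).ge⟩
  infer_instance

/-- If `l` generates `aD ∩ bD` and `l = bα = aβ`, then `(α, β)⁻¹ = D`: for `z` with
`zα, zβ ∈ D`, the element `zl = a(zβ) = b(zα)` lies in `aD ∩ bD = lD`. -/
theorem inv_span_pair_eq_one_of_inf_eq_span {a b l α β : D}
    (hl : Ideal.span {a} ⊓ Ideal.span {b} = Ideal.span {l}) (hl0 : l ≠ 0)
    (hα : l = b * α) (hβ : l = a * β) :
    ((Ideal.span {α, β} : Ideal D) : FractionalIdeal D⁰ (FractionRing D))⁻¹ = 1 := by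
  set ι := algebraMap D (FractionRing D)
  have hι : Function.Injective ι := IsFractionRing.injective D _
  have hα0 : α ≠ 0 := by rintro rfl; exact hl0 (by rw [hα, mul_zero])
  have hJ : ((Ideal.span {α, β} : Ideal D) : FractionalIdeal D⁰ (FractionRing D)) ≠ 0 :=
    coeIdeal_ne_zero.mpr fun h => hα0 (Ideal.span_eq_bot.mp h α (Set.mem_insert α _))
  refine le_antisymm (fun z hz => ?_) ?_
  · rw [mem_inv_iff hJ] at hz
    have hmem : ∀ y ∈ ({α, β} : Set D), ∃ c : D, ι c = z * ι y := fun y hy =>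
      (mem_one_iff _).mp (hz _ ((mem_coeIdeal _).mpr ⟨y, Ideal.subset_span hy, rfl⟩))
    obtain ⟨c, hc⟩ := hmem α (Set.mem_insert α _)
    obtain ⟨d, hd⟩ := hmem β (Set.mem_insert_of_mem α rfl)
    have hab : ι a * ι β = ι b * ι α := by rw [← map_mul, ← map_mul, ← hα, ← hβ]
    have hcd : a * d = b * c := hι (by rw [map_mul, map_mul, hc, hd]; linear_combination z * hab)
    have hmem_l : a * d ∈ Ideal.span {l} :=
      hl ▸ ⟨Ideal.mem_span_singleton'.mpr ⟨d, mul_comm d a⟩,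
        Ideal.mem_span_singleton'.mpr ⟨c, by rw [hcd, mul_comm]⟩⟩
    obtain ⟨e, he⟩ := Ideal.mem_span_singleton'.mp hmem_l
    have hιl : ι l ≠ 0 := (map_ne_zero_iff ι hι).mpr hl0
    refine (mem_one_iff _).mpr ⟨e, mul_right_cancel₀ hιl ?_⟩
    rw [← map_mul, he, map_mul, hd, hβ, map_mul]
    ring
  · rw [inv_eq, le_div_iff_mul_le hJ, one_mul]
    exact coeIdeal_le_one

theorem IsTLocal.valuationRing_of_inf_isPrincipal (hD : IsTLocal D)
    (h : ∀ a b : D, a ≠ 0 → b ≠ 0 → (Ideal.span {a} ⊓ Ideal.span {b}).IsPrincipal) :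
    ValuationRing D := by
  obtain ⟨_, _⟩ := id hD
  refine ValuationRing.iff_dvd_total.mpr ⟨fun a b => ?_⟩
  rcases eq_or_ne a 0 with rfl | ha
  · exact Or.inr (dvd_zero b)
  rcases eq_or_ne b 0 with rfl | hb
  · exact Or.inl (dvd_zero a)
  obtain ⟨⟨l, hl⟩⟩ := h a b ha hb
  rw [Ideal.submodule_span_eq] at hl
  have hlmem : l ∈ Ideal.span {a} ⊓ Ideal.span {b} := hl ▸ Ideal.mem_span_singleton_self l
  obtain ⟨β, hβ⟩ := Ideal.mem_span_singleton.mp hlmem.1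
  obtain ⟨α, hα⟩ := Ideal.mem_span_singleton.mp hlmem.2
  have hl0 : l ≠ 0 := by
    rintro rfl
    have hab : a * b ∈ Ideal.span {a} ⊓ Ideal.span {b} :=
      ⟨Ideal.mul_mem_right b _ (Ideal.mem_span_singleton_self a),
        Ideal.mul_mem_left _ a (Ideal.mem_span_singleton_self b)⟩
    rw [hl, Ideal.span_singleton_eq_bot.mpr rfl, Ideal.mem_bot] at hab
    exact mul_ne_zero ha hb hab
  have htop := hD.eq_top_of_inv_eq_one (Submodule.fg_span (Set.toFinite _))
    (inv_span_pair_eq_one_of_inf_eq_span hl hl0 hα hβ)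
  obtain ⟨x, y, hxy⟩ := Ideal.mem_span_pair.mp (htop ▸ Submodule.mem_top (x := (1 : D)))
  rcases isUnit_or_isUnit_of_add_one hxy with hu | hu
  · exact Or.inl ((isUnit_of_mul_isUnit_right hu).dvd_mul_right.mp (hα ▸ Dvd.intro β hβ.symm))
  · exact Or.inr ((isUnit_of_mul_isUnit_right hu).dvd_mul_right.mp (hβ ▸ Dvd.intro α hα.symm))

end

/-- For an integral domain `D` the following are equivalent:
(i) `D` is a valuation domain;
(ii) `D` is a `t`-local GCD domain (`aD ∩ bD` is principal for all nonzero `a`, `b`);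
(iii) `D` is a `t`-local Prüfer `v`-multiplication domain (every nonzero finitely
generated ideal is `t`-invertible). -/
theorem valuation_iff_t_local_gcd_iff_t_local_pvmd (D : Type*) [CommRing D]
    [IsDomain D] :
    List.TFAE
      [ ValuationRing D,
        IsTLocal D ∧ ∀ a b : D, a ≠ 0 → b ≠ 0 →
          (Ideal.span {a} ⊓ Ideal.span {b}).IsPrincipal,
        IsTLocal D ∧ ∀ I : Ideal D, I ≠ ⊥ → I.FG →
          tClos D ((I : FractionalIdeal D⁰ (FractionRing D)) *
              (I : FractionalIdeal D⁰ (FractionRing D))⁻¹) =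
            ((1 : FractionalIdeal D⁰ (FractionRing D)) :
              Submodule D (FractionRing D)) ] := by
  tfae_have 1 → 2 := fun _ =>
    ⟨.of_isBezout, fun a b _ _ => ValuationRing.inf_span_singleton_isPrincipal a b⟩
  tfae_have 2 → 1 := fun ⟨hD, h⟩ => hD.valuationRing_of_inf_isPrincipal h
  tfae_have 1 → 3 := fun _ => ⟨.of_isBezout, fun _ hI hfg => tClos_coeIdeal_mul_inv hI hfg⟩
  tfae_have 3 → 1 := fun ⟨hD, h⟩ => hD.valuationRing_of_tClos_mul_inv_eq_one h
  tfae_finish
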